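/- arXiv:2202.07868 — 4 statements merged into one kernel-verified Lean document; each statement's English description precedes it below -/
import Mathlib

section
/- Three-point lemma with strong convexity: Let Y be a nonempty closed convex subset of a real inner product space, g : Y → ℝ be μ-strongly convex (μ ≥ 0) in the sense that g(y) − g(ȳ') − ⟨∇g(ȳ'), y − ȳ'⟩ ≥ (μ/2)‖y − ȳ'‖² for all y, ȳ' ∈ Y, and let τ > 0, ȳ ∈ Y, π a vector. If ŷ minimizes y ↦ ⟨π, y⟩ + g(y) + (τ/2)‖ȳ − y‖² over Y, then for all y ∈ Y: ⟨π, ŷ − y⟩ + g(ŷ) − g(y) ≤ (τ/2)‖ȳ − y‖² − ((τ+μ)/2)‖ŷ − y‖² − (τ/2)‖ȳ − ŷ‖². -/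
/-!
The objective `y ↦ ⟪π, y⟫ + g y + τ / 2 * ‖ybar - y‖ ^ 2` is `(μ + τ)`-strongly convex on `Y`: the
linear term is convex, the first-order inequality for `g` makes `g` `μ`-strongly convex, and the
proximal term is `τ`-strongly convex. A strongly convex function grows at least quadratically away
from a minimiser, `F ŷ + (μ + τ) / 2 * ‖y - ŷ‖ ^ 2 ≤ F y`, and expanding `F` gives the inequality.
-/

open RealInnerProductSpace Set Filter Topology

lemma le_of_forall_mem_Ioc_le_add_mul {a b c : ℝ} (h : ∀ t ∈ Ioc (0 : ℝ) 1, a ≤ b + t * c) :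
    a ≤ b := by
  have hlim : Tendsto (fun t : ℝ ↦ b + t * c) (𝓝[>] 0) (𝓝 b) :=
    tendsto_nhdsWithin_of_tendsto_nhds (Continuous.tendsto' (by fun_prop) 0 b (by simp))
  refine ge_of_tendsto hlim ?_
  filter_upwards [Ioc_mem_nhdsGT (zero_lt_one' ℝ)] with t ht using h t ht

section StrongConvexity

variable {E : Type*} [NormedAddCommGroup E] [InnerProductSpace ℝ E] {s : Set E} {f g : E → ℝ}
  {m n : ℝ}

lemma StrongConvexOn.add (hf : StrongConvexOn s m f) (hg : StrongConvexOn s n g) :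
    StrongConvexOn s (m + n) (f + g) :=
  (UniformConvexOn.add hf hg).mono fun r ↦ le_of_eq (by simp only [Pi.add_apply]; ring)

lemma strongConvexOn_of_sub_sub_inner_ge (hs : Convex ℝ s) (f' : E → E)
    (h : ∀ x ∈ s, ∀ y ∈ s, f x - f y - ⟪f' y, x - y⟫ ≥ m / 2 * ‖x - y‖ ^ 2) :
    StrongConvexOn s m f := by
  refine ⟨hs, fun x hx y hy a b ha hb hab ↦ ?_⟩
  obtain rfl : a = 1 - b := eq_sub_of_add_eq hab
  set z := (1 - b) • x + b • y
  have hz : z ∈ s := hs hx hy ha hb hab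
  -- Taken at `z`, the two first-order inequalities have gradient terms that cancel in the
  -- convex combination, since `(1 - b) • (x - z) + b • (y - z) = 0`.
  have hxz : x - z = b • (x - y) := by module
  have hyz : y - z = -((1 - b) • (x - y)) := by module
  have hx' := h x hx z hz
  have hy' := h y hy z hz
  rw [hxz, real_inner_smul_right, norm_smul, Real.norm_of_nonneg hb] at hx'
  rw [hyz, inner_neg_right, norm_neg, real_inner_smul_right, norm_smul,
    Real.norm_of_nonneg ha] at hy'
  simp only [smul_eq_mul]
  nlinarith [mul_le_mul_of_nonneg_left hx' ha, mul_le_mul_of_nonneg_left hy' hb]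

lemma strongConvexOn_mul_norm_sub_sq (hs : Convex ℝ s) (c : E) :
    StrongConvexOn s m fun y ↦ m / 2 * ‖c - y‖ ^ 2 := by
  have hAffine : (fun y ↦ m / 2 * ‖c - y‖ ^ 2 - m / 2 * ‖y‖ ^ 2) =
      fun y ↦ m / 2 * ‖c‖ ^ 2 - innerₛₗ ℝ (m • c) y := by
    funext y
    rw [innerₛₗ_apply_apply, real_inner_smul_left, norm_sub_sq_real]
    ring
  rw [strongConvexOn_iff_convex, hAffine]
  exact (convexOn_const _ hs).sub ((innerₛₗ ℝ (m • c)).concaveOn hs)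

lemma StrongConvexOn.add_mul_norm_sub_sq_le_of_isMinOn (hf : StrongConvexOn s m f) {x y : E}
    (hx : x ∈ s) (hmin : IsMinOn f s x) (hy : y ∈ s) :
    f x + m / 2 * ‖y - x‖ ^ 2 ≤ f y := by
  refine le_of_forall_mem_Ioc_le_add_mul (c := m / 2 * ‖y - x‖ ^ 2) fun t ⟨ht0, ht1⟩ ↦ ?_
  have hseg := hf.2 hx hy (sub_nonneg.2 ht1) ht0.le (sub_add_cancel 1 t)
  have hle := isMinOn_iff.1 hmin _ (hf.1 hx hy (sub_nonneg.2 ht1) ht0.le (sub_add_cancel 1 t))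
  rw [norm_sub_rev] at hseg
  simp only [smul_eq_mul] at hseg
  nlinarith

end StrongConvexity

theorem three_point_lemma_strong_convex_general {n : ℕ}
    (Y : Set (EuclideanSpace ℝ (Fin n)))
    (hconv : Convex ℝ Y)
    (g : EuclideanSpace ℝ (Fin n) → ℝ)
    (gradg : EuclideanSpace ℝ (Fin n) → EuclideanSpace ℝ (Fin n))
    (μ : ℝ)
    (hstrong : ∀ y ∈ Y, ∀ ybar' ∈ Y,
      g y - g ybar' - ⟪gradg ybar', y - ybar'⟫ ≥ μ / 2 * ‖y - ybar'‖ ^ 2)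
    (π ybar yhat : EuclideanSpace ℝ (Fin n)) (τ : ℝ)
    (hyhat : yhat ∈ Y)
    (hmin : ∀ y ∈ Y, ⟪π, yhat⟫ + g yhat + τ / 2 * ‖ybar - yhat‖ ^ 2 ≤
      ⟪π, y⟫ + g y + τ / 2 * ‖ybar - y‖ ^ 2) :
    ∀ y ∈ Y, ⟪π, yhat - y⟫ + g yhat - g y ≤
      τ / 2 * ‖ybar - y‖ ^ 2 - (τ + μ) / 2 * ‖yhat - y‖ ^ 2
        - τ / 2 * ‖ybar - yhat‖ ^ 2 := by
  intro y hy
  have hlinear : StrongConvexOn Y 0 fun y ↦ ⟪π, y⟫ :=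
    strongConvexOn_zero.2 ((innerₛₗ ℝ π).convexOn hconv)
  have hobjective : StrongConvexOn Y (0 + μ + τ)
      fun y ↦ ⟪π, y⟫ + g y + τ / 2 * ‖ybar - y‖ ^ 2 :=
    (hlinear.add (strongConvexOn_of_sub_sub_inner_ge hconv gradg hstrong)).add
      (strongConvexOn_mul_norm_sub_sq hconv ybar)
  have hgrowth := hobjective.add_mul_norm_sub_sq_le_of_isMinOn hyhat (isMinOn_iff.2 hmin) hy
  rw [inner_sub_right, norm_sub_rev yhat y]
  linarith

theorem three_point_lemma_strong_convex {n : ℕ}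
    (Y : Set (EuclideanSpace ℝ (Fin n)))
    (hne : Y.Nonempty) (hcl : IsClosed Y) (hconv : Convex ℝ Y)
    (g : EuclideanSpace ℝ (Fin n) → ℝ)
    (gradg : EuclideanSpace ℝ (Fin n) → EuclideanSpace ℝ (Fin n))
    (μ : ℝ) (hμ : 0 ≤ μ)
    (hstrong : ∀ y ∈ Y, ∀ ybar' ∈ Y,
      g y - g ybar' - ⟪gradg ybar', y - ybar'⟫ ≥ μ / 2 * ‖y - ybar'‖ ^ 2)
    (π ybar yhat : EuclideanSpace ℝ (Fin n)) (τ : ℝ) (hτ : 0 < τ)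
    (hyhat : yhat ∈ Y)
    (hmin : ∀ y ∈ Y, ⟪π, yhat⟫ + g yhat + τ / 2 * ‖ybar - yhat‖ ^ 2 ≤
      ⟪π, y⟫ + g y + τ / 2 * ‖ybar - y‖ ^ 2) :
    ∀ y ∈ Y, ⟪π, yhat - y⟫ + g yhat - g y ≤
      τ / 2 * ‖ybar - y‖ ^ 2 - (τ + μ) / 2 * ‖yhat - y‖ ^ 2
        - τ / 2 * ‖ybar - yhat‖ ^ 2 :=
  three_point_lemma_strong_convex_general Y hconv g gradg μ hstrong π ybar yhat τ hyhat hmin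
end

section
/- Deterministic three-point telescoping bound with regularization: let τ_t, ρ_t > 0 satisfy τ_t + ρ_t ≥ τ_{t+1} for all t, let π ∈ ℝⁿ, and let δ_t ∈ ℝⁿ be arbitrary vectors. Define π_0 = 0 and π_{t+1} = argmin over a convex set Π ∋ 0 of π' ↦ −⟨δ_t, π'⟩ + (τ_t/2)‖π_t − π'‖² + (ρ_t/2)‖π'‖². Then for any π ∈ Π: ∑_{t=0}^{N−1} ⟨π − π_t, δ_t⟩ ≤ (τ_0/2 + ∑_{t=0}^{N−1} ρ_t/2)‖π‖² + ∑_{t=0}^{N−1} ‖δ_t‖²/(2τ_t). -/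
open RealInnerProductSpace

variable {E : Type*} [NormedAddCommGroup E] [InnerProductSpace ℝ E]

lemma quad_expand (δ w q v : E) (τ ρ lam : ℝ) :
    -⟪δ, q + lam • v⟫ + τ / 2 * ‖w - (q + lam • v)‖ ^ 2 + ρ / 2 * ‖q + lam • v‖ ^ 2
      = (-⟪δ, q⟫ + τ / 2 * ‖w - q‖ ^ 2 + ρ / 2 * ‖q‖ ^ 2)
        + lam * (-⟪δ, v⟫ - τ * ⟪w - q, v⟫ + ρ * ⟪q, v⟫)
        + lam ^ 2 * ((τ + ρ) / 2) * ‖v‖ ^ 2 := by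
  have h1 : w - (q + lam • v) = (w - q) - lam • v := by abel
  rw [h1, norm_sub_sq_real, norm_add_sq_real, inner_add_right, real_inner_smul_right,
    real_inner_smul_right, real_inner_smul_right, norm_smul]
  simp only [Real.norm_eq_abs, mul_pow, sq_abs]
  ring

lemma strong_min (S : Set E) (hconv : Convex ℝ S) (q : E) (hq : q ∈ S)
    (δ w : E) (τ ρ : ℝ) (hτ : 0 < τ) (hρ : 0 < ρ)
    (hmin : ∀ p ∈ S, -⟪δ, q⟫ + τ / 2 * ‖w - q‖ ^ 2 + ρ / 2 * ‖q‖ ^ 2 ≤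
      -⟪δ, p⟫ + τ / 2 * ‖w - p‖ ^ 2 + ρ / 2 * ‖p‖ ^ 2)
    (p : E) (hp : p ∈ S) :
    -⟪δ, q⟫ + τ / 2 * ‖w - q‖ ^ 2 + ρ / 2 * ‖q‖ ^ 2 + (τ + ρ) / 2 * ‖p - q‖ ^ 2 ≤
      -⟪δ, p⟫ + τ / 2 * ‖w - p‖ ^ 2 + ρ / 2 * ‖p‖ ^ 2 := by
  set v : E := p - q with hv
  set A : ℝ := -⟪δ, v⟫ - τ * ⟪w - q, v⟫ + ρ * ⟪q, v⟫ with hA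
  set B : ℝ := (τ + ρ) / 2 * ‖v‖ ^ 2 with hB
  have hBnn : 0 ≤ B := by positivity
  have key : ∀ lam : ℝ, 0 < lam → lam ≤ 1 → 0 ≤ A + lam * B := by
    intro lam h0l h1l
    have hmem : q + lam • v ∈ S := by
      have := hconv hq hp (by linarith : (0:ℝ) ≤ 1 - lam) (le_of_lt h0l) (by ring)
      convert this using 1
      rw [hv]; module
    have := hmin _ hmem
    rw [quad_expand] at this
    have h2 : 0 ≤ lam * A + lam ^ 2 * ((τ + ρ) / 2) * ‖v‖ ^ 2 := by linarith
    have h3 : lam * A + lam ^ 2 * ((τ + ρ) / 2) * ‖v‖ ^ 2 = lam * (A + lam * B) := by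
      rw [hB]; ring
    rw [h3] at h2
    exact nonneg_of_mul_nonneg_right h2 h0l
  have hAnn : 0 ≤ A := by
    by_contra h
    push_neg at h
    have hB1 : (0:ℝ) < B + 1 := by linarith
    have hlam : 0 < -A / (2 * (B + 1)) := div_pos (by linarith) (by linarith)
    set lam := min 1 (-A / (2 * (B + 1))) with hlam'
    have h0l : 0 < lam := lt_min one_pos hlam
    have h1l : lam ≤ 1 := min_le_left _ _
    have hk := key lam h0l h1l
    have h4 : lam * (B + 1) ≤ -A / 2 := by
      have h5 : lam ≤ -A / (2 * (B + 1)) := min_le_right _ _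
      have heq : -A / (2 * (B + 1)) * (B + 1) = -A / 2 := by field_simp
      linarith [mul_le_mul_of_nonneg_right h5 hB1.le, heq]
    nlinarith [h0l, hBnn]
  have hone := quad_expand δ w q v τ ρ 1
  have hpv : q + (1:ℝ) • v = p := by rw [hv]; module
  rw [hpv] at hone
  rw [hone]
  nlinarith [hAnn, hBnn]

theorem telescoping_bound_adaptive {n : ℕ}
    (S : Set (EuclideanSpace ℝ (Fin n)))
    (hne : S.Nonempty) (hcl : IsClosed S) (hconv : Convex ℝ S)
    (h0 : (0 : EuclideanSpace ℝ (Fin n)) ∈ S)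
    (τ ρ : ℕ → ℝ) (hτ : ∀ t, 0 < τ t) (hρ : ∀ t, 0 < ρ t)
    (hstep : ∀ t, τ t + ρ t ≥ τ (t + 1))
    (δ : ℕ → EuclideanSpace ℝ (Fin n))
    (πseq : ℕ → EuclideanSpace ℝ (Fin n))
    (hπ0 : πseq 0 = 0)
    (hπmem : ∀ t, πseq (t + 1) ∈ S)
    (hπmin : ∀ t, ∀ p ∈ S,
      -⟪δ t, πseq (t + 1)⟫ + τ t / 2 * ‖πseq t - πseq (t + 1)‖ ^ 2
          + ρ t / 2 * ‖πseq (t + 1)‖ ^ 2 ≤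
        -⟪δ t, p⟫ + τ t / 2 * ‖πseq t - p‖ ^ 2 + ρ t / 2 * ‖p‖ ^ 2) :
    ∀ π ∈ S, ∀ N : ℕ,
      ∑ t ∈ Finset.range N, ⟪π - πseq t, δ t⟫ ≤
        (τ 0 / 2 + ∑ t ∈ Finset.range N, ρ t / 2) * ‖π‖ ^ 2
          + ∑ t ∈ Finset.range N, ‖δ t‖ ^ 2 / (2 * τ t) := by
  intro π hπ N
  have step : ∀ t, ⟪π - πseq t, δ t⟫ ≤
      τ t / 2 * ‖π - πseq t‖ ^ 2 - τ (t + 1) / 2 * ‖π - πseq (t + 1)‖ ^ 2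
        + ρ t / 2 * ‖π‖ ^ 2 + ‖δ t‖ ^ 2 / (2 * τ t) := by
    intro t
    have hsm := strong_min S hconv (πseq (t + 1)) (hπmem t) (δ t) (πseq t)
      (τ t) (ρ t) (hτ t) (hρ t) (hπmin t) π hπ
    set a : ℝ := ‖πseq t - πseq (t + 1)‖ with ha
    have hcs : ⟪δ t, πseq (t + 1) - πseq t⟫ ≤ ‖δ t‖ ^ 2 / (2 * τ t) + τ t / 2 * a ^ 2 := by
      have h1 : ⟪δ t, πseq (t + 1) - πseq t⟫ ≤ ‖δ t‖ * ‖πseq (t + 1) - πseq t‖ :=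
        real_inner_le_norm _ _
      have h2 : ‖πseq (t + 1) - πseq t‖ = a := norm_sub_rev _ _
      rw [h2] at h1
      have h3 : ‖δ t‖ ^ 2 / (2 * τ t) + τ t / 2 * a ^ 2 - ‖δ t‖ * a
          = (‖δ t‖ - τ t * a) ^ 2 / (2 * τ t) := by
        have htne : τ t ≠ 0 := (hτ t).ne'
        field_simp
        ring
      have h4 : 0 ≤ (‖δ t‖ - τ t * a) ^ 2 / (2 * τ t) :=
        div_nonneg (sq_nonneg _) (by linarith [hτ t])
      linarith
    have hsplit : ⟪π - πseq t, δ t⟫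
        = (⟪δ t, π⟫ - ⟪δ t, πseq (t + 1)⟫) + ⟪δ t, πseq (t + 1) - πseq t⟫ := by
      rw [inner_sub_left, inner_sub_right, real_inner_comm π (δ t),
        real_inner_comm (πseq t) (δ t)]
      ring
    have hrev : ‖πseq t - π‖ = ‖π - πseq t‖ := norm_sub_rev _ _
    have hmono : τ (t + 1) / 2 * ‖π - πseq (t + 1)‖ ^ 2
        ≤ (τ t + ρ t) / 2 * ‖π - πseq (t + 1)‖ ^ 2 := by
      nlinarith [sq_nonneg ‖π - πseq (t + 1)‖, hstep t]
    have hq : 0 ≤ ρ t / 2 * ‖πseq (t + 1)‖ ^ 2 := by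
      have := (hρ t).le; positivity
    rw [hsplit]
    rw [hrev] at hsm
    linarith
  have main : ∀ M : ℕ, ∑ t ∈ Finset.range M, ⟪π - πseq t, δ t⟫ ≤
      τ 0 / 2 * ‖π - πseq 0‖ ^ 2 - τ M / 2 * ‖π - πseq M‖ ^ 2
        + ∑ t ∈ Finset.range M, (ρ t / 2 * ‖π‖ ^ 2 + ‖δ t‖ ^ 2 / (2 * τ t)) := by
    intro M
    induction M with
    | zero => simp
    | succ M ih =>
      rw [Finset.sum_range_succ, Finset.sum_range_succ]
      linarith [step M]
  have h0' : ‖π - πseq 0‖ = ‖π‖ := by rw [hπ0]; simp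
  have hsum : ∑ t ∈ Finset.range N, (ρ t / 2 * ‖π‖ ^ 2 + ‖δ t‖ ^ 2 / (2 * τ t))
      = (∑ t ∈ Finset.range N, ρ t / 2) * ‖π‖ ^ 2
        + ∑ t ∈ Finset.range N, ‖δ t‖ ^ 2 / (2 * τ t) := by
    rw [Finset.sum_add_distrib, Finset.sum_mul]
  have hN : 0 ≤ τ N / 2 * ‖π - πseq N‖ ^ 2 := by
    have := (hτ N).le; positivity
  have hm := main N
  rw [h0', hsum] at hm
  have hr : (τ 0 / 2 + ∑ t ∈ Finset.range N, ρ t / 2) * ‖π‖ ^ 2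
      = τ 0 / 2 * ‖π‖ ^ 2 + (∑ t ∈ Finset.range N, ρ t / 2) * ‖π‖ ^ 2 := by ring
  linarith
end

section
/- Deterministic telescoping bound (fixed stepsize): let τ > 0, Π a nonempty closed convex set containing 0 in ℝⁿ, δ_t ∈ ℝⁿ arbitrary; define π_0 = 0 and π_{t+1} the minimizer over Π of π' ↦ −⟨δ_t, π'⟩ + (τ/2)‖π_t − π'‖². Then for any π ∈ Π and any N: ∑_{t=0}^{N−1} ⟨π − π_t, δ_t⟩ ≤ (τ/2)‖π‖² + ∑_{t=0}^{N−1} ‖δ_t‖²/(2τ). -/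
/-!
Each step is a proximal step, so its first-order optimality condition over the convex set gives
the three-point inequality
`⟪π - πₜ, δₜ⟫ ≤ τ/2 (‖πₜ - π‖² - ‖πₜ₊₁ - π‖²) + ‖δₜ‖²/(2τ)`,
where Young's inequality absorbs the move `πₜ₊₁ - πₜ`. Summing, the distances telescope and the
last one is dropped.
-/

open RealInnerProductSpace Filter Topology Finset

lemma nonneg_of_forall_mul_add_mul_sq_nonneg {a b : ℝ}
    (h : ∀ s ∈ Set.Ioc (0 : ℝ) 1, 0 ≤ a * s + b * s ^ 2) : 0 ≤ a := by
  have hlim : Tendsto (fun s : ℝ => a + b * s) (𝓝[>] 0) (𝓝 a) := by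
    have : Continuous fun s : ℝ => a + b * s := by fun_prop
    simpa using (this.tendsto 0).mono_left nhdsWithin_le_nhds
  refine ge_of_tendsto hlim ?_
  filter_upwards [Ioc_mem_nhdsGT (zero_lt_one' ℝ)] with s hs
  have hpos : 0 < s := hs.1
  have := h s hs
  nlinarith

section

variable {E : Type*} [NormedAddCommGroup E] [InnerProductSpace ℝ E]

lemma real_inner_le_young (g w : E) {τ : ℝ} (hτ : 0 < τ) :
    ⟪g, w⟫ ≤ ‖g‖ ^ 2 / (2 * τ) + τ / 2 * ‖w‖ ^ 2 := by
  have hsq : 0 ≤ ‖g - τ • w‖ ^ 2 := sq_nonneg _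
  rw [norm_sub_sq_real, real_inner_smul_right, norm_smul, Real.norm_of_nonneg hτ.le] at hsq
  rw [div_add' _ _ _ (by positivity), le_div_iff₀ (by positivity)]
  nlinarith

lemma inner_le_zero_of_proximal_min {S : Set E} (hS : Convex ℝ S) {g x v : E} {τ : ℝ}
    (hv : v ∈ S)
    (hmin : ∀ p ∈ S, -⟪g, v⟫ + τ / 2 * ‖x - v‖ ^ 2 ≤ -⟪g, p⟫ + τ / 2 * ‖x - p‖ ^ 2)
    {p : E} (hp : p ∈ S) :
    ⟪g + τ • (x - v), p - v⟫ ≤ 0 := by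
  suffices 0 ≤ -⟪g + τ • (x - v), p - v⟫ by linarith
  refine nonneg_of_forall_mul_add_mul_sq_nonneg (b := τ / 2 * ‖p - v‖ ^ 2) fun s hs => ?_
  have hq := hmin _ (hS.add_smul_sub_mem hv hp (Set.Ioc_subset_Icc_self hs))
  have hx : x - (v + s • (p - v)) = (x - v) - s • (p - v) := by abel
  rw [hx, norm_sub_sq_real (x - v), inner_add_right, real_inner_smul_right, real_inner_smul_right,
    norm_smul, Real.norm_of_nonneg hs.1.le] at hq
  rw [inner_add_left, real_inner_smul_left]
  nlinarith

lemma three_point_of_proximal_min {S : Set E} (hS : Convex ℝ S) {g x v : E} {τ : ℝ}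
    (hτ : 0 < τ) (hv : v ∈ S)
    (hmin : ∀ p ∈ S, -⟪g, v⟫ + τ / 2 * ‖x - v‖ ^ 2 ≤ -⟪g, p⟫ + τ / 2 * ‖x - p‖ ^ 2)
    {p : E} (hp : p ∈ S) :
    ⟪p - x, g⟫ ≤ τ / 2 * (‖x - p‖ ^ 2 - ‖v - p‖ ^ 2) + ‖g‖ ^ 2 / (2 * τ) := by
  have hopt := inner_le_zero_of_proximal_min hS hv hmin hp
  rw [inner_add_left, real_inner_smul_left] at hopt
  have hyoung := real_inner_le_young g (v - x) hτ
  have hsplit : ⟪p - x, g⟫ = ⟪g, p - v⟫ + ⟪g, v - x⟫ := by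
    rw [real_inner_comm, ← inner_add_right, sub_add_sub_cancel]
  have hdist : ‖x - p‖ ^ 2 = ‖x - v‖ ^ 2 + 2 * ⟪x - v, v - p⟫ + ‖v - p‖ ^ 2 := by
    rw [← norm_add_sq_real, sub_add_sub_cancel]
  have hflip : ⟪x - v, v - p⟫ = -⟪x - v, p - v⟫ := by
    rw [← inner_neg_right, neg_sub]
  rw [norm_sub_rev v x] at hyoung
  rw [hsplit, hdist, hflip]
  nlinarith

end

theorem telescoping_bound_fixed_general {n : ℕ}
    (S : Set (EuclideanSpace ℝ (Fin n)))
    (hconv : Convex ℝ S)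
    (τ : ℝ) (hτ : 0 < τ)
    (δ : ℕ → EuclideanSpace ℝ (Fin n))
    (πseq : ℕ → EuclideanSpace ℝ (Fin n))
    (hπ0 : πseq 0 = 0)
    (hπmem : ∀ t, πseq (t + 1) ∈ S)
    (hπmin : ∀ t, ∀ p ∈ S,
      -⟪δ t, πseq (t + 1)⟫ + τ / 2 * ‖πseq t - πseq (t + 1)‖ ^ 2 ≤
        -⟪δ t, p⟫ + τ / 2 * ‖πseq t - p‖ ^ 2) :
    ∀ π ∈ S, ∀ N : ℕ,
      ∑ t ∈ Finset.range N, ⟪π - πseq t, δ t⟫ ≤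
        τ / 2 * ‖π‖ ^ 2 + ∑ t ∈ Finset.range N, ‖δ t‖ ^ 2 / (2 * τ) := by
  intro π hπ N
  calc ∑ t ∈ range N, ⟪π - πseq t, δ t⟫
      ≤ ∑ t ∈ range N, (τ / 2 * (‖πseq t - π‖ ^ 2 - ‖πseq (t + 1) - π‖ ^ 2)
          + ‖δ t‖ ^ 2 / (2 * τ)) :=
        sum_le_sum fun t _ => three_point_of_proximal_min hconv hτ (hπmem t) (hπmin t) hπ
    _ = τ / 2 * (‖π‖ ^ 2 - ‖πseq N - π‖ ^ 2) + ∑ t ∈ range N, ‖δ t‖ ^ 2 / (2 * τ) := by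
        rw [sum_add_distrib, ← mul_sum, sum_range_sub' (fun t => ‖πseq t - π‖ ^ 2), hπ0,
          zero_sub, norm_neg]
    _ ≤ τ / 2 * ‖π‖ ^ 2 + ∑ t ∈ range N, ‖δ t‖ ^ 2 / (2 * τ) := by
        gcongr
        exact sub_le_self _ (sq_nonneg _)

theorem telescoping_bound_fixed {n : ℕ}
    (S : Set (EuclideanSpace ℝ (Fin n)))
    (hne : S.Nonempty) (hcl : IsClosed S) (hconv : Convex ℝ S)
    (h0 : (0 : EuclideanSpace ℝ (Fin n)) ∈ S)
    (τ : ℝ) (hτ : 0 < τ)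
    (δ : ℕ → EuclideanSpace ℝ (Fin n))
    (πseq : ℕ → EuclideanSpace ℝ (Fin n))
    (hπ0 : πseq 0 = 0)
    (hπmem : ∀ t, πseq (t + 1) ∈ S)
    (hπmin : ∀ t, ∀ p ∈ S,
      -⟪δ t, πseq (t + 1)⟫ + τ / 2 * ‖πseq t - πseq (t + 1)‖ ^ 2 ≤
        -⟪δ t, p⟫ + τ / 2 * ‖πseq t - p‖ ^ 2) :
    ∀ π ∈ S, ∀ N : ℕ,
      ∑ t ∈ Finset.range N, ⟪π - πseq t, δ t⟫ ≤
        τ / 2 * ‖π‖ ^ 2 + ∑ t ∈ Finset.range N, ‖δ t‖ ^ 2 / (2 * τ) :=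
  telescoping_bound_fixed_general S hconv τ hτ δ πseq hπ0 hπmem hπmin
end

section
/- Dual-update one-step inequality with regularization: let β, τ > 0, γ₀, γ_t ∈ ℝ₊^m, h ∈ ℝ^m, and let γ_{t+1} be the maximizer over ℝ₊^m of γ ↦ ⟨h, γ⟩ − (β/2)‖γ_t − γ‖² − (τ/2)‖γ₀ − γ‖². Then for all γ ∈ ℝ₊^m: −⟨h, γ_{t+1} − γ⟩ ≤ (β/2)‖γ_t − γ‖² − (β/2)‖γ_t − γ_{t+1}‖² − ((β+τ)/2)‖γ_{t+1} − γ‖² − (τ/2)‖γ_{t+1} − γ₀‖² + (τ/2)‖γ − γ₀‖². -/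
/-!
The objective `F y = ⟪h, y⟫ - β/2 ‖γt - y‖² - τ/2 ‖γ₀ - y‖²` is a quadratic with Hessian
`-(β + τ)`, so along a segment it is exactly `F (x + t d) = F x + t ⟪∇F x, d⟫ - (β + τ)/2 t² ‖d‖²`.
Maximality of `x` on the convex orthant forces `⟪∇F x, y - x⟫ ≤ 0` (let `t → 0⁺`), and then
`t = 1` gives `F y + (β + τ)/2 ‖y - x‖² ≤ F x`, which is the claimed inequality rearranged.
-/

open Filter Topology RealInnerProductSpace

theorem nonpos_of_forall_mul_le_mul_sq {c K : ℝ}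
    (h : ∀ t : ℝ, 0 < t → t ≤ 1 → c * t ≤ K * t ^ 2) : c ≤ 0 := by
  have hlim : Tendsto (fun t : ℝ => K * t) (𝓝[>] 0) (𝓝 0) :=
    tendsto_nhdsWithin_of_tendsto_nhds ((continuous_const_mul K).tendsto' 0 0 (mul_zero K))
  refine ge_of_tendsto hlim ?_
  filter_upwards [Ioo_mem_nhdsGT one_pos] with t ⟨ht0, ht1⟩
  exact le_of_mul_le_mul_right (by nlinarith [h t ht0 ht1.le]) ht0

section ProxObjective

variable {E : Type*} [NormedAddCommGroup E] [InnerProductSpace ℝ E]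

noncomputable def proxObjective (β τ : ℝ) (h a b y : E) : ℝ :=
  ⟪h, y⟫ - β / 2 * ‖a - y‖ ^ 2 - τ / 2 * ‖b - y‖ ^ 2

theorem norm_sub_add_smul_sq (c x d : E) (t : ℝ) :
    ‖c - (x + t • d)‖ ^ 2 = ‖c - x‖ ^ 2 + 2 * t * ⟪x - c, d⟫ + t ^ 2 * ‖d‖ ^ 2 := by
  rw [← norm_neg, show -(c - (x + t • d)) = (x - c) + t • d by abel, norm_add_sq_real,
    norm_sub_rev x c, real_inner_smul_right, norm_smul, Real.norm_eq_abs, mul_pow, sq_abs]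
  ring

theorem proxObjective_add_smul (β τ : ℝ) (h a b x d : E) (t : ℝ) :
    proxObjective β τ h a b (x + t • d) =
      proxObjective β τ h a b x + t * ⟪h - β • (x - a) - τ • (x - b), d⟫
        - (β + τ) / 2 * t ^ 2 * ‖d‖ ^ 2 := by
  simp only [proxObjective, norm_sub_add_smul_sq, inner_add_right, real_inner_smul_right,
    inner_sub_left, real_inner_smul_left]
  ring

variable {β τ : ℝ} {h a b x y : E} {s : Set E}

theorem inner_proxObjective_grad_nonpos (hs : Convex ℝ s) (hx : x ∈ s)
    (hmax : IsMaxOn (proxObjective β τ h a b) s x) (hy : y ∈ s) :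
    ⟪h - β • (x - a) - τ • (x - b), y - x⟫ ≤ 0 := by
  refine nonpos_of_forall_mul_le_mul_sq (K := (β + τ) / 2 * ‖y - x‖ ^ 2) fun t ht0 ht1 => ?_
  have hle := isMaxOn_iff.1 hmax _ (hs.add_smul_sub_mem hx hy ⟨ht0.le, ht1⟩)
  rw [proxObjective_add_smul] at hle
  linarith

theorem proxObjective_add_sq_le (hs : Convex ℝ s) (hx : x ∈ s)
    (hmax : IsMaxOn (proxObjective β τ h a b) s x) (hy : y ∈ s) :
    proxObjective β τ h a b y + (β + τ) / 2 * ‖y - x‖ ^ 2 ≤ proxObjective β τ h a b x := by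
  have hy_eq := proxObjective_add_smul β τ h a b x (y - x) 1
  rw [one_smul, add_sub_cancel] at hy_eq
  have := inner_proxObjective_grad_nonpos hs hx hmax hy
  linarith

end ProxObjective

theorem convex_setOf_forall_nonneg (m : ℕ) :
    Convex ℝ {γ : EuclideanSpace ℝ (Fin m) | ∀ i, 0 ≤ γ i} := by
  intro x hx y hy a b ha hb _ i
  simp only [PiLp.add_apply, PiLp.smul_apply, smul_eq_mul]
  exact add_nonneg (mul_nonneg ha (hx i)) (mul_nonneg hb (hy i))

theorem dual_update_one_step_general {m : ℕ} (β τ : ℝ)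
    (γ₀ γt h γnext : EuclideanSpace ℝ (Fin m))
    (hmem : ∀ i, 0 ≤ γnext i)
    (hmax : ∀ γ : EuclideanSpace ℝ (Fin m), (∀ i, 0 ≤ γ i) →
      ⟪h, γ⟫ - β / 2 * ‖γt - γ‖ ^ 2 - τ / 2 * ‖γ₀ - γ‖ ^ 2 ≤
        ⟪h, γnext⟫ - β / 2 * ‖γt - γnext‖ ^ 2 - τ / 2 * ‖γ₀ - γnext‖ ^ 2) :
    ∀ γ : EuclideanSpace ℝ (Fin m), (∀ i, 0 ≤ γ i) →
      -⟪h, γnext - γ⟫ ≤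
        β / 2 * ‖γt - γ‖ ^ 2 - β / 2 * ‖γt - γnext‖ ^ 2
          - (β + τ) / 2 * ‖γnext - γ‖ ^ 2 - τ / 2 * ‖γnext - γ₀‖ ^ 2
          + τ / 2 * ‖γ - γ₀‖ ^ 2 := by
  intro γ hγ
  have hgrowth := proxObjective_add_sq_le (convex_setOf_forall_nonneg m) hmem
    (isMaxOn_iff.2 hmax) hγ
  simp only [proxObjective] at hgrowth
  rw [inner_sub_right, norm_sub_rev γnext γ, norm_sub_rev γnext γ₀, norm_sub_rev γ γ₀]
  linarith

theorem dual_update_one_step {m : ℕ} (β τ : ℝ) (hβ : 0 < β) (hτ : 0 < τ)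
    (γ₀ γt h γnext : EuclideanSpace ℝ (Fin m))
    (hγ₀ : ∀ i, 0 ≤ γ₀ i) (hγt : ∀ i, 0 ≤ γt i)
    (hmem : ∀ i, 0 ≤ γnext i)
    (hmax : ∀ γ : EuclideanSpace ℝ (Fin m), (∀ i, 0 ≤ γ i) →
      ⟪h, γ⟫ - β / 2 * ‖γt - γ‖ ^ 2 - τ / 2 * ‖γ₀ - γ‖ ^ 2 ≤
        ⟪h, γnext⟫ - β / 2 * ‖γt - γnext‖ ^ 2 - τ / 2 * ‖γ₀ - γnext‖ ^ 2) :
    ∀ γ : EuclideanSpace ℝ (Fin m), (∀ i, 0 ≤ γ i) →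
      -⟪h, γnext - γ⟫ ≤
        β / 2 * ‖γt - γ‖ ^ 2 - β / 2 * ‖γt - γnext‖ ^ 2
          - (β + τ) / 2 * ‖γnext - γ‖ ^ 2 - τ / 2 * ‖γnext - γ₀‖ ^ 2
          + τ / 2 * ‖γ - γ₀‖ ^ 2 :=
  dual_update_one_step_general β τ γ₀ γt h γnext hmem hmax
end
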